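/- arXiv:1709.09567 — 2 statements merged into one kernel-verified Lean document; each statement's English description precedes it below -/
import Mathlib

section
/- Let α : ℝ^N → ℝ^N and H : ℝ^N → ℝ be smooth, and define the Lagrangian L(q, v) = ⟨α(q), v⟩ − H(q). Set A(q) = α'(q) (the Jacobian matrix) and A_skew(q) = A(q)ᵀ − A(q), and assume A_skew(q) is invertible for all q. Then a smooth curve q(t) satisfies the Euler–Lagrange equation ∂L/∂q − d/dt(∂L/∂q̇) = 0 along q if and only if q̇(t) = A_skew(q(t))⁻¹ H'(q(t))ᵀ for all t. -/
open scoped BigOperators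
open Matrix

theorem stmt0 (N : ℕ)
    (α : (Fin N → ℝ) → (Fin N → ℝ)) (H : (Fin N → ℝ) → ℝ)
    (hα : ContDiff ℝ (⊤ : ℕ∞) α) (hH : ContDiff ℝ (⊤ : ℕ∞) H)
    (L : (Fin N → ℝ) → (Fin N → ℝ) → ℝ)
    (hL : ∀ q v, L q v = (∑ i, α q i * v i) - H q)
    (A : (Fin N → ℝ) → Matrix (Fin N) (Fin N) ℝ)
    (hA : ∀ q i j, A q i j = fderiv ℝ (fun p => α p i) q (Pi.single j 1))
    (Askew : (Fin N → ℝ) → Matrix (Fin N) (Fin N) ℝ)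
    (hAskew : ∀ p, Askew p = (A p)ᵀ - A p)
    (hinv : ∀ p, IsUnit (Askew p).det)
    (q : ℝ → Fin N → ℝ) (hq : ContDiff ℝ (⊤ : ℕ∞) q) :
    (∀ t i,
        fderiv ℝ (fun p => L p (fun j => deriv (fun s => q s j) t)) (q t) (Pi.single i 1)
          - deriv (fun s => fderiv ℝ (fun v => L (q s) v)
              (fun j => deriv (fun u => q u j) s) (Pi.single i 1)) t = 0)
      ↔ (∀ t, (fun i => deriv (fun s => q s i) t)
          = ((Askew (q t))⁻¹).mulVec (fun i => fderiv ℝ H (q t) (Pi.single i 1))) := by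
  have hαd : Differentiable ℝ α := hα.differentiable (by simp)
  have hHd : Differentiable ℝ H := hH.differentiable (by simp)
  have hqd : Differentiable ℝ q := hq.differentiable (by simp)
  have hαi : ∀ i, Differentiable ℝ fun p => α p i := fun i => differentiable_pi.mp hαd i
  have hqi : ∀ i, Differentiable ℝ fun s => q s i := fun i => differentiable_pi.mp hqd i
  have key : ∀ (f : (Fin N → ℝ) →L[ℝ] ℝ) (x : Fin N → ℝ),
      f x = ∑ j, x j * f (Pi.single j 1) := by
    intro f x
    have hx : x = ∑ j, x j • (Pi.single j 1 : Fin N → ℝ) := by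
      funext k
      simp [Pi.single_apply]
    conv_lhs => rw [hx]
    simp [smul_eq_mul]
  have outer : ∀ (v p0 : Fin N → ℝ) (i : Fin N),
      fderiv ℝ (fun p => L p v) p0 (Pi.single i 1)
        = (∑ j, A p0 j i * v j) - fderiv ℝ H p0 (Pi.single i 1) := by
    intro v p0 i
    have hfun : (fun p => L p v) = fun p => (∑ j, α p j * v j) - H p := by
      funext p; rw [hL]
    have h1 : HasFDerivAt (fun p => ∑ j, α p j * v j)
        (∑ j, v j • fderiv ℝ (fun p => α p j) p0) p0 := by
      apply HasFDerivAt.fun_sum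
      intro j _
      exact ((hαi j p0).hasFDerivAt).mul_const (v j)
    have h2 := h1.fun_sub (hHd p0).hasFDerivAt
    rw [hfun, h2.fderiv]
    simp [hA, mul_comm]
  have inner : ∀ (s : ℝ) (v0 : Fin N → ℝ) (i : Fin N),
      fderiv ℝ (fun v => L (q s) v) v0 (Pi.single i 1) = α (q s) i := by
    intro s v0 i
    have hfun : (fun v => L (q s) v) = fun v => (∑ j, α (q s) j * v j) - H (q s) := by
      funext v; rw [hL]
    have h1 : HasFDerivAt (fun v : Fin N → ℝ => ∑ j, α (q s) j * v j)
        (∑ j, α (q s) j • (ContinuousLinearMap.proj j : (Fin N → ℝ) →L[ℝ] ℝ)) v0 := by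
      apply HasFDerivAt.fun_sum
      intro j _
      exact ((ContinuousLinearMap.proj j : (Fin N → ℝ) →L[ℝ] ℝ).hasFDerivAt).const_mul
        (α (q s) j)
    have h2 := h1.sub_const (H (q s))
    rw [hfun, h2.fderiv]
    simp [Pi.single_apply]
  have hderiv : ∀ (t : ℝ) (i : Fin N),
      deriv (fun s => fderiv ℝ (fun v => L (q s) v)
          (fun j => deriv (fun u => q u j) s) (Pi.single i 1)) t
        = ∑ j, A (q t) i j * deriv (fun s => q s j) t := by
    intro t i
    have hfun : (fun s => fderiv ℝ (fun v => L (q s) v)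
        (fun j => deriv (fun u => q u j) s) (Pi.single i 1)) = fun s => α (q s) i := by
      funext s; exact inner s _ i
    rw [hfun]
    have hq' : HasDerivAt q (fun j => deriv (fun s => q s j) t) t := by
      rw [hasDerivAt_pi]
      intro j
      exact ((hqi j) t).hasDerivAt
    have hc : HasDerivAt (fun s => α (q s) i)
        ((fderiv ℝ (fun p => α p i) (q t)) fun j => deriv (fun s => q s j) t) t :=
      (hαi i (q t)).hasFDerivAt.comp_hasDerivAt t hq'
    rw [hc.deriv, key]
    refine Finset.sum_congr rfl fun j _ => ?_
    rw [hA, mul_comm]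
  have mulVec_eq : ∀ (t : ℝ) (i : Fin N),
      (Askew (q t)).mulVec (fun j => deriv (fun s => q s j) t) i
        = (∑ j, A (q t) j i * deriv (fun s => q s j) t)
          - ∑ j, A (q t) i j * deriv (fun s => q s j) t := by
    intro t i
    simp [Matrix.mulVec, dotProduct, hAskew, sub_mul, Finset.sum_sub_distrib,
      Matrix.transpose_apply]
  have reform : ∀ (t : ℝ) (i : Fin N),
      fderiv ℝ (fun p => L p (fun j => deriv (fun s => q s j) t)) (q t) (Pi.single i 1)
          - deriv (fun s => fderiv ℝ (fun v => L (q s) v)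
              (fun j => deriv (fun u => q u j) s) (Pi.single i 1)) t
        = (Askew (q t)).mulVec (fun j => deriv (fun s => q s j) t) i
            - fderiv ℝ H (q t) (Pi.single i 1) := by
    intro t i
    rw [outer, hderiv, mulVec_eq]
    ring
  constructor
  · intro h t
    have hmv : (Askew (q t)).mulVec (fun j => deriv (fun s => q s j) t)
        = (fun i => fderiv ℝ H (q t) (Pi.single i 1)) := by
      funext i
      have := h t i
      rw [reform] at this
      linarith [this]
    have : ((Askew (q t))⁻¹).mulVec ((Askew (q t)).mulVec (fun j => deriv (fun s => q s j) t))
        = (fun j => deriv (fun s => q s j) t) := by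
      rw [Matrix.mulVec_mulVec, Matrix.nonsing_inv_mul _ (hinv _), Matrix.one_mulVec]
    rw [hmv] at this
    exact this.symm
  · intro h t i
    rw [reform, sub_eq_zero, h t, Matrix.mulVec_mulVec,
      Matrix.mul_nonsing_inv _ (hinv _), Matrix.one_mulVec]
end

section
/- Let L : ℝ^N × ℝ^N → ℝ be smooth and define the extended discrete Lagrangian L̂(x, y, x', y') = ½ L(x + y, x' − y') + ½ L(x − y, x' + y'). A bi-infinite sequence (x_j, y_j) satisfies the discrete Euler–Lagrange equations for L̂, namely D₂L̂(x_{j−1}, y_{j−1}, x_j, y_j) + D₁L̂(x_j, y_j, x_{j+1}, y_{j+1}) = 0 (where D₁, D₂ denote derivatives with respect to the (x,y)-pair in the first and second slot), if and only if both sequences q_j^± = x_j ± (−1)^j y_j satisfy the discrete Euler–Lagrange equations for L: D₂L(q_{j−1}^±, q_j^±) + D₁L(q_j^±, q_{j+1}^±) = 0 for all j. -/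
section Aux

variable {E : Type*} [NormedAddCommGroup E] [NormedSpace ℝ E]

private lemma pd2_aux (L : E → E → ℝ)
    (hf : Differentiable ℝ (fun p : E × E => L p.1 p.2)) (a b : E) :
    fderiv ℝ (fun b' => L a b') b
      = (fderiv ℝ (fun p : E × E => L p.1 p.2) (a, b)).comp (ContinuousLinearMap.inr ℝ E E) := by
  have h : HasFDerivAt (fun b' : E => (a, b')) (ContinuousLinearMap.inr ℝ E E) b :=
    HasFDerivAt.prodMk (hasFDerivAt_const a b) (hasFDerivAt_id b)
  exact ((hf (a, b)).hasFDerivAt.comp b h).fderiv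

private lemma pd1_aux (L : E → E → ℝ)
    (hf : Differentiable ℝ (fun p : E × E => L p.1 p.2)) (a b : E) :
    fderiv ℝ (fun a' => L a' b) a
      = (fderiv ℝ (fun p : E × E => L p.1 p.2) (a, b)).comp (ContinuousLinearMap.inl ℝ E E) := by
  have h : HasFDerivAt (fun a' : E => (a', b)) (ContinuousLinearMap.inl ℝ E E) a :=
    HasFDerivAt.prodMk (hasFDerivAt_id a) (hasFDerivAt_const b a)
  exact ((hf (a, b)).hasFDerivAt.comp a h).fderiv

private lemma hat2_aux (L : E → E → ℝ)
    (hf : Differentiable ℝ (fun p : E × E => L p.1 p.2)) (u v a b h k : E) :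
    (fderiv ℝ (fun w : E × E => (1/2) * L (u + v) (w.1 - w.2) + (1/2) * L (u - v) (w.1 + w.2)) (a, b)) (h, k)
      = (1/2) * (fderiv ℝ (fun p : E × E => L p.1 p.2) (u + v, a - b)) (0, h - k)
        + (1/2) * (fderiv ℝ (fun p : E × E => L p.1 p.2) (u - v, a + b)) (0, h + k) := by
  set f : E × E → ℝ := fun p => L p.1 p.2 with hfdef
  have hA1 : HasFDerivAt (fun w : E × E => ((u + v : E), w.1 - w.2))
      ((0 : (E × E) →L[ℝ] E).prod (ContinuousLinearMap.fst ℝ E E - ContinuousLinearMap.snd ℝ E E)) (a, b) :=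
    HasFDerivAt.prodMk (hasFDerivAt_const _ _) (hasFDerivAt_fst.sub hasFDerivAt_snd)
  have hA2 : HasFDerivAt (fun w : E × E => ((u - v : E), w.1 + w.2))
      ((0 : (E × E) →L[ℝ] E).prod (ContinuousLinearMap.fst ℝ E E + ContinuousLinearMap.snd ℝ E E)) (a, b) :=
    HasFDerivAt.prodMk (hasFDerivAt_const _ _) (hasFDerivAt_fst.add hasFDerivAt_snd)
  have h1 := ((hf (u + v, a - b)).hasFDerivAt.comp (a, b) hA1).const_mul (1/2 : ℝ)
  have h2 := ((hf (u - v, a + b)).hasFDerivAt.comp (a, b) hA2).const_mul (1/2 : ℝ)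
  have h3 : HasFDerivAt (fun w : E × E => (1/2) * L (u + v) (w.1 - w.2) + (1/2) * L (u - v) (w.1 + w.2))
      ((1/2 : ℝ) • ((fderiv ℝ f (u + v, a - b)).comp
          ((0 : (E × E) →L[ℝ] E).prod (ContinuousLinearMap.fst ℝ E E - ContinuousLinearMap.snd ℝ E E)))
        + (1/2 : ℝ) • ((fderiv ℝ f (u - v, a + b)).comp
          ((0 : (E × E) →L[ℝ] E).prod (ContinuousLinearMap.fst ℝ E E + ContinuousLinearMap.snd ℝ E E)))) (a, b) :=
    h1.add h2
  rw [h3.fderiv]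
  simp [ContinuousLinearMap.prod_apply]

private lemma hat1_aux (L : E → E → ℝ)
    (hf : Differentiable ℝ (fun p : E × E => L p.1 p.2)) (u v a b h k : E) :
    (fderiv ℝ (fun w : E × E => (1/2) * L (w.1 + w.2) (u - v) + (1/2) * L (w.1 - w.2) (u + v)) (a, b)) (h, k)
      = (1/2) * (fderiv ℝ (fun p : E × E => L p.1 p.2) (a + b, u - v)) (h + k, 0)
        + (1/2) * (fderiv ℝ (fun p : E × E => L p.1 p.2) (a - b, u + v)) (h - k, 0) := by
  set f : E × E → ℝ := fun p => L p.1 p.2 with hfdef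
  have hA1 : HasFDerivAt (fun w : E × E => (w.1 + w.2, (u - v : E)))
      (((ContinuousLinearMap.fst ℝ E E + ContinuousLinearMap.snd ℝ E E)).prod (0 : (E × E) →L[ℝ] E)) (a, b) :=
    HasFDerivAt.prodMk (hasFDerivAt_fst.add hasFDerivAt_snd) (hasFDerivAt_const _ _)
  have hA2 : HasFDerivAt (fun w : E × E => (w.1 - w.2, (u + v : E)))
      (((ContinuousLinearMap.fst ℝ E E - ContinuousLinearMap.snd ℝ E E)).prod (0 : (E × E) →L[ℝ] E)) (a, b) :=
    HasFDerivAt.prodMk (hasFDerivAt_fst.sub hasFDerivAt_snd) (hasFDerivAt_const _ _)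
  have h1 := ((hf (a + b, u - v)).hasFDerivAt.comp (a, b) hA1).const_mul (1/2 : ℝ)
  have h2 := ((hf (a - b, u + v)).hasFDerivAt.comp (a, b) hA2).const_mul (1/2 : ℝ)
  have h3 : HasFDerivAt (fun w : E × E => (1/2) * L (w.1 + w.2) (u - v) + (1/2) * L (w.1 - w.2) (u + v))
      ((1/2 : ℝ) • ((fderiv ℝ f (a + b, u - v)).comp
          (((ContinuousLinearMap.fst ℝ E E + ContinuousLinearMap.snd ℝ E E)).prod (0 : (E × E) →L[ℝ] E)))
        + (1/2 : ℝ) • ((fderiv ℝ f (a - b, u + v)).comp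
          (((ContinuousLinearMap.fst ℝ E E - ContinuousLinearMap.snd ℝ E E)).prod (0 : (E × E) →L[ℝ] E)))) (a, b) :=
    h1.add h2
  rw [h3.fderiv]
  simp [ContinuousLinearMap.prod_apply]

end Aux

/-- Pointwise discrete EL equation for `L` along `x + s (-1)^j y`. -/
private def Psi {N : ℕ} (L : (Fin N → ℝ) → (Fin N → ℝ) → ℝ) (x y : ℤ → Fin N → ℝ)
    (j : ℤ) (s : ℝ) : Prop :=
  ∀ h : Fin N → ℝ,
    (fderiv ℝ (fun p : (Fin N → ℝ) × (Fin N → ℝ) => L p.1 p.2)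
        (x (j-1) - s • y (j-1), x j + s • y j)) (0, h)
    + (fderiv ℝ (fun p : (Fin N → ℝ) × (Fin N → ℝ) => L p.1 p.2)
        (x j + s • y j, x (j+1) - s • y (j+1))) (h, 0) = 0

private lemma bridge_aux {N : ℕ} (L : (Fin N → ℝ) → (Fin N → ℝ) → ℝ)
    (hf : Differentiable ℝ (fun p : (Fin N → ℝ) × (Fin N → ℝ) => L p.1 p.2))
    (x y : ℤ → Fin N → ℝ) (j : ℤ) (s : ℝ) :
    (fderiv ℝ (fun b => L (x (j-1) + (-s) • y (j-1)) b) (x j + s • y j)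
      + fderiv ℝ (fun a => L a (x (j+1) + (-s) • y (j+1))) (x j + s • y j) = 0)
    ↔ Psi L x y j s := by
  have e : ∀ z w : Fin N → ℝ, z + (-s) • w = z - s • w := by
    intro z w; rw [neg_smul, ← sub_eq_add_neg]
  rw [e, e, pd2_aux L hf, pd1_aux L hf]
  constructor
  · intro H h
    have := ContinuousLinearMap.ext_iff.mp H h
    simpa using this
  · intro H
    ext h
    simpa using H h

theorem stmt5 (N : ℕ)
    (L : (Fin N → ℝ) → (Fin N → ℝ) → ℝ)
    (hL : ContDiff ℝ (⊤ : ℕ∞) (fun p : (Fin N → ℝ) × (Fin N → ℝ) => L p.1 p.2))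
    (Lhat : ((Fin N → ℝ) × (Fin N → ℝ)) → ((Fin N → ℝ) × (Fin N → ℝ)) → ℝ)
    (hLhat : ∀ x y x' y', Lhat (x, y) (x', y')
      = (1 / 2) * L (x + y) (x' - y') + (1 / 2) * L (x - y) (x' + y'))
    (x y : ℤ → Fin N → ℝ) :
    (∀ j : ℤ,
        fderiv ℝ (fun w => Lhat (x (j - 1), y (j - 1)) w) (x j, y j)
          + fderiv ℝ (fun w => Lhat w (x (j + 1), y (j + 1))) (x j, y j) = 0)
      ↔ (∀ (ε : ℝ), (ε = 1 ∨ ε = -1) → ∀ j : ℤ,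
          fderiv ℝ (fun b => L (x (j - 1) + (ε * (-1 : ℝ) ^ (j - 1)) • y (j - 1)) b)
              (x j + (ε * (-1 : ℝ) ^ j) • y j)
            + fderiv ℝ (fun a => L a (x (j + 1) + (ε * (-1 : ℝ) ^ (j + 1)) • y (j + 1)))
              (x j + (ε * (-1 : ℝ) ^ j) • y j) = 0) := by
  have hf : Differentiable ℝ (fun p : (Fin N → ℝ) × (Fin N → ℝ) => L p.1 p.2) :=
    hL.differentiable (by simp)
  set DF := fderiv ℝ (fun p : (Fin N → ℝ) × (Fin N → ℝ) => L p.1 p.2) with hDF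
  -- helper facts about zpow of -1
  have hne : (-1 : ℝ) ≠ 0 := by norm_num
  have hc1 : ∀ j : ℤ, (-1 : ℝ) ^ (j - 1) = -(-1 : ℝ) ^ j := by
    intro j
    rw [zpow_sub₀ hne, zpow_one, div_neg, div_one]
  have hc2 : ∀ j : ℤ, (-1 : ℝ) ^ (j + 1) = -(-1 : ℝ) ^ j := by
    intro j
    rw [zpow_add₀ hne, zpow_one, mul_neg_one]
  have hsq : ∀ j : ℤ, (-1 : ℝ) ^ j * (-1 : ℝ) ^ j = 1 := by
    intro j
    rw [← zpow_add₀ hne, ← two_mul, zpow_mul]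
    norm_num
  have hcor : ∀ j : ℤ, (-1 : ℝ) ^ j = 1 ∨ (-1 : ℝ) ^ j = -1 := fun j =>
    mul_self_eq_one_iff.mp (hsq j)
  -- the per-step equivalence between the extended EL equation and the two Psi's
  have key : ∀ j : ℤ,
      (fderiv ℝ (fun w => Lhat (x (j - 1), y (j - 1)) w) (x j, y j)
        + fderiv ℝ (fun w => Lhat w (x (j + 1), y (j + 1))) (x j, y j) = 0)
      ↔ (Psi L x y j 1 ∧ Psi L x y j (-1)) := by
    intro j
    have hfun2 : (fun w : (Fin N → ℝ) × (Fin N → ℝ) => Lhat (x (j - 1), y (j - 1)) w)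
        = fun w => (1/2) * L (x (j - 1) + y (j - 1)) (w.1 - w.2)
            + (1/2) * L (x (j - 1) - y (j - 1)) (w.1 + w.2) :=
      funext fun w => hLhat _ _ w.1 w.2
    have hfun1 : (fun w : (Fin N → ℝ) × (Fin N → ℝ) => Lhat w (x (j + 1), y (j + 1)))
        = fun w => (1/2) * L (w.1 + w.2) (x (j + 1) - y (j + 1))
            + (1/2) * L (w.1 - w.2) (x (j + 1) + y (j + 1)) :=
      funext fun w => hLhat w.1 w.2 _ _
    have ma : ∀ (c : ((Fin N → ℝ) × (Fin N → ℝ)) →L[ℝ] ℝ) (z : Fin N → ℝ),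
        c (0, z + z) = c (0, z) + c (0, z) := by
      intro c z
      rw [show ((0 : Fin N → ℝ), z + z) = ((0 : Fin N → ℝ), z) + ((0 : Fin N → ℝ), z) from by
        simp [Prod.ext_iff], map_add]
    have mb : ∀ (c : ((Fin N → ℝ) × (Fin N → ℝ)) →L[ℝ] ℝ) (z : Fin N → ℝ),
        c (z + z, 0) = c (z, 0) + c (z, 0) := by
      intro c z
      rw [show (z + z, (0 : Fin N → ℝ)) = (z, (0 : Fin N → ℝ)) + (z, (0 : Fin N → ℝ)) from by
        simp [Prod.ext_iff], map_add]
    constructor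
    · intro H
      have Happ : ∀ h k : Fin N → ℝ,
          (1/2) * DF (x (j - 1) + y (j - 1), x j - y j) (0, h - k)
            + (1/2) * DF (x (j - 1) - y (j - 1), x j + y j) (0, h + k)
            + ((1/2) * DF (x j + y j, x (j + 1) - y (j + 1)) (h + k, 0)
              + (1/2) * DF (x j - y j, x (j + 1) + y (j + 1)) (h - k, 0)) = 0 := by
        intro h k
        have H' := ContinuousLinearMap.ext_iff.mp H (h, k)
        rw [ContinuousLinearMap.add_apply, ContinuousLinearMap.zero_apply, hfun2, hfun1,
          hat2_aux L hf, hat1_aux L hf] at H'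
        exact H'
      constructor
      · intro h
        have := Happ h h
        simp only [sub_self, ma, mb] at this
        simp only [one_smul]
        have z1 : DF (x (j - 1) + y (j - 1), x j - y j) ((0 : Fin N → ℝ), (0 : Fin N → ℝ)) = 0 := by
          rw [show ((0 : Fin N → ℝ), (0 : Fin N → ℝ)) = (0 : (Fin N → ℝ) × (Fin N → ℝ)) from rfl,
            map_zero]
        have z2 : DF (x j - y j, x (j + 1) + y (j + 1)) ((0 : Fin N → ℝ), (0 : Fin N → ℝ)) = 0 := by
          rw [show ((0 : Fin N → ℝ), (0 : Fin N → ℝ)) = (0 : (Fin N → ℝ) × (Fin N → ℝ)) from rfl,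
            map_zero]
        rw [z1, z2] at this
        linarith [this]
      · intro h
        have := Happ h (-h)
        simp only [sub_neg_eq_add, add_neg_cancel, ma, mb] at this
        simp only [neg_one_smul, sub_neg_eq_add, ← sub_eq_add_neg]
        have z1 : DF (x (j - 1) - y (j - 1), x j + y j) ((0 : Fin N → ℝ), (0 : Fin N → ℝ)) = 0 := by
          rw [show ((0 : Fin N → ℝ), (0 : Fin N → ℝ)) = (0 : (Fin N → ℝ) × (Fin N → ℝ)) from rfl,
            map_zero]
        have z2 : DF (x j + y j, x (j + 1) - y (j + 1)) ((0 : Fin N → ℝ), (0 : Fin N → ℝ)) = 0 := by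
          rw [show ((0 : Fin N → ℝ), (0 : Fin N → ℝ)) = (0 : (Fin N → ℝ) × (Fin N → ℝ)) from rfl,
            map_zero]
        rw [z1, z2] at this
        linarith [this]
    · rintro ⟨H1, H2⟩
      apply ContinuousLinearMap.ext
      rintro ⟨h, k⟩
      rw [ContinuousLinearMap.add_apply, ContinuousLinearMap.zero_apply, hfun2, hfun1,
        hat2_aux L hf, hat1_aux L hf]
      have H1' := H1 (h + k)
      simp only [one_smul] at H1'
      have H2' := H2 (h - k)
      simp only [neg_one_smul, sub_neg_eq_add, ← sub_eq_add_neg] at H2'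
      rw [← hDF] at H1' H2'
      linarith [H1', H2']
  constructor
  · intro hE ε hε j
    have kj := (key j).mp (hE j)
    have e1 : ε * (-1 : ℝ) ^ (j - 1) = -(ε * (-1 : ℝ) ^ j) := by rw [hc1]; ring
    have e2 : ε * (-1 : ℝ) ^ (j + 1) = -(ε * (-1 : ℝ) ^ j) := by rw [hc2]; ring
    rw [e1, e2, bridge_aux L hf x y j (ε * (-1 : ℝ) ^ j)]
    have hor : ε * (-1 : ℝ) ^ j = 1 ∨ ε * (-1 : ℝ) ^ j = -1 := by
      rcases hε with h | h <;> rcases hcor j with h' | h' <;> simp [h, h']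
    rcases hor with h | h <;> rw [h]
    · exact kj.1
    · exact kj.2
  · intro H j
    rw [key j]
    constructor
    · have inst := H ((-1 : ℝ) ^ j) (hcor j) j
      have e1 : (-1 : ℝ) ^ j * (-1 : ℝ) ^ (j - 1) = -(1 : ℝ) := by
        rw [hc1]; linear_combination -hsq j
      have e0 : (-1 : ℝ) ^ j * (-1 : ℝ) ^ j = (1 : ℝ) := hsq j
      have e2 : (-1 : ℝ) ^ j * (-1 : ℝ) ^ (j + 1) = -(1 : ℝ) := by
        rw [hc2]; linear_combination -hsq j
      rw [e1, e0, e2] at inst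
      exact (bridge_aux L hf x y j 1).mp inst
    · have hε : -(-1 : ℝ) ^ j = 1 ∨ -(-1 : ℝ) ^ j = -1 := by
        rcases hcor j with h | h <;> simp [h]
      have inst := H (-(-1 : ℝ) ^ j) hε j
      have e1 : -(-1 : ℝ) ^ j * (-1 : ℝ) ^ (j - 1) = -(-1 : ℝ) := by
        rw [hc1]; linear_combination hsq j
      have e0 : -(-1 : ℝ) ^ j * (-1 : ℝ) ^ j = (-1 : ℝ) := by
        linear_combination -hsq j
      have e2 : -(-1 : ℝ) ^ j * (-1 : ℝ) ^ (j + 1) = -(-1 : ℝ) := by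
        rw [hc2]; linear_combination hsq j
      rw [e1, e0, e2] at inst
      exact (bridge_aux L hf x y j (-1)).mp inst
end
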